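/- arXiv:2101.03708 — 2 statements merged into one kernel-verified Lean document; each statement's English description precedes it below -/
import Mathlib

section
/- Let l be a positive integer and consider the lattice Z·H ⊕ Z·C with H² = 4, H·C = 2l, C² = -2. Suppose a, b are positive integers with (aH - bC)² = -2, and assume that whenever b > 1 one has 2a - 2lb > 0 implies aH - bC decomposes as (a - lb)H + b(lH - C) with a - lb > 0. Then in fact if additionally aH - bC is not a positive combination of H and lH - C with positive coefficients, one has b = 1 and a = l. -/
/-- In the lattice with H² = 4, H·C = 2l, C² = -2: if a, b are positive integers
with (aH - bC)² = -2, and aH - bC is not a positive combination of H and lH - C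
(i.e., not both b > 1 and a - lb > 0), then b = 1 and a = l. -/
theorem stmt_4 (l a b : ℤ) (hl : 0 < l) (ha : 0 < a) (hb : 0 < b)
    (heq : 4 * a ^ 2 - 4 * l * a * b - 2 * b ^ 2 = -2)
    (hnot : ¬(1 < b ∧ 0 < a - l * b)) :
    b = 1 ∧ a = l := by
  by_cases hb1 : b = 1
  · subst hb1
    refine ⟨rfl, ?_⟩
    have h : a * (a - l) = 0 := by nlinarith
    rcases mul_eq_zero.mp h with h0 | h0
    · omega
    · omega
  · exfalso
    apply hnot
    have hb2 : 2 ≤ b := by omega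
    refine ⟨by omega, ?_⟩
    have key : 4 * a * (a - l * b) = 2 * ((b - 1) * (b + 1)) := by linear_combination heq
    nlinarith [mul_pos (sub_pos.mpr (by omega : (1:ℤ) < b)) (by positivity : (0:ℤ) < b + 1)]
end

section
/- Let m = 15. The Pell-type equation 4a² - 30ab - 2b² = -2, i.e., 2a² - 15ab - b² = -1, has infinitely many solutions in positive integers (a, b). Specifically, if F and G are defined by F + G√233 = (1072400673 + 70255304√233)ⁿ for n ≥ 1, then (a, b) = (2G, F - 15G) is a solution. -/
private def zz : ℤ√233 := ⟨1072400673, 70255304⟩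

private lemma zz_mul_re (w : ℤ√233) : (w * zz).re = w.re * 1072400673 + 233 * (w.im * 70255304) := by
  simp [zz, Zsqrtd.re_mul, mul_assoc]

private lemma zz_mul_im (w : ℤ√233) : (w * zz).im = w.re * 70255304 + w.im * 1072400673 := by
  simp [zz, Zsqrtd.im_mul]

private lemma key : ∀ n : ℕ, 1 ≤ n →
    0 < (zz ^ n).re ∧ 0 < (zz ^ n).im ∧
      (zz ^ n).re ^ 2 - 233 * (zz ^ n).im ^ 2 = 1 := by
  intro n hn
  induction n with
  | zero => omega
  | succ k ih =>
    rcases Nat.eq_zero_or_pos k with hk | hk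
    · subst hk
      norm_num [zz]
    · obtain ⟨hR, hI, hN⟩ := ih hk
      rw [pow_succ]
      refine ⟨?_, ?_, ?_⟩
      · rw [zz_mul_re]; positivity
      · rw [zz_mul_im]; positivity
      · rw [zz_mul_re, zz_mul_im]; nlinarith [hN]

private lemma im_lt (n : ℕ) (hn : 1 ≤ n) : (zz ^ n).im < (zz ^ (n + 1)).im := by
  obtain ⟨hR, hI, _⟩ := key n hn
  rw [pow_succ, zz_mul_im]
  nlinarith

private lemma im_strictMono : StrictMono (fun n => (zz ^ (n + 1)).im) := by
  apply strictMono_nat_of_lt_succ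
  intro n
  exact im_lt (n + 1) (by omega)

/-- For m = 15, the equation 2a² - 15ab - b² = -1 has infinitely many solutions in
positive integers: if F + G√233 = (1072400673 + 70255304√233)ⁿ for n ≥ 1, then
(a, b) = (2G, F - 15G) is such a solution. -/
theorem stmt_6 :
    (∀ n : ℕ, 1 ≤ n →
      letI z : ℤ√233 := ⟨1072400673, 70255304⟩
      letI F : ℤ := (z ^ n).re
      letI G : ℤ := (z ^ n).im
      0 < 2 * G ∧ 0 < F - 15 * G ∧
        2 * (2 * G) ^ 2 - 15 * (2 * G) * (F - 15 * G) - (F - 15 * G) ^ 2 = -1) ∧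
    {p : ℤ × ℤ | 0 < p.1 ∧ 0 < p.2 ∧
      2 * p.1 ^ 2 - 15 * p.1 * p.2 - p.2 ^ 2 = -1}.Infinite := by
  have main : ∀ n : ℕ, 1 ≤ n →
      0 < 2 * (zz ^ n).im ∧ 0 < (zz ^ n).re - 15 * (zz ^ n).im ∧
        2 * (2 * (zz ^ n).im) ^ 2 - 15 * (2 * (zz ^ n).im) * ((zz ^ n).re - 15 * (zz ^ n).im)
          - ((zz ^ n).re - 15 * (zz ^ n).im) ^ 2 = -1 := by
    intro n hn
    obtain ⟨hR, hI, hN⟩ := key n hn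
    refine ⟨by linarith, ?_, by nlinarith⟩
    nlinarith
  constructor
  · intro n hn
    exact main n hn
  · apply Set.infinite_of_injective_forall_mem
      (f := fun n : ℕ => (2 * (zz ^ (n + 1)).im, (zz ^ (n + 1)).re - 15 * (zz ^ (n + 1)).im))
    · intro a b hab
      have := congrArg Prod.fst hab
      simp only at this
      have h2 : (zz ^ (a + 1)).im = (zz ^ (b + 1)).im := by omega
      exact im_strictMono.injective h2
    · intro n
      exact main (n + 1) (by omega)
end
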